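/- arXiv:1411.0516 — 2 statements merged into one kernel-verified Lean document; each statement's English description precedes it below -/
import Mathlib

section
/- If a vector x satisfies y = Ax and the number of nonzero entries of x is strictly less than spark(A)/2, then x is the unique solution of y = Ax among all vectors with at most that sparsity; more precisely, any z with y = Az and ‖z‖₀ < spark(A)/2 equals x. -/
/-- Number of nonzero entries of a vector (the ℓ⁰ "norm"). -/
noncomputable def sparsity {n : ℕ} (x : Fin n → ℝ) : ℕ :=
  (Finset.univ.filter fun i => x i ≠ 0).card

/-- The spark of a matrix: the minimal number of nonzero entries of a
nonzero kernel vector (equivalently, the smallest size of a linearly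
dependent set of columns). -/
noncomputable def spark {m n : ℕ} (A : Matrix (Fin m) (Fin n) ℝ) : ℕ :=
  sInf {k | ∃ v : Fin n → ℝ, v ≠ 0 ∧ A.mulVec v = 0 ∧ sparsity v = k}

lemma sparsity_sub_le {n : ℕ} (z x : Fin n → ℝ) :
    sparsity (z - x) ≤ sparsity z + sparsity x := by
  unfold sparsity
  have h : (Finset.univ.filter fun i => (z - x) i ≠ 0) ⊆
      (Finset.univ.filter fun i => z i ≠ 0) ∪ (Finset.univ.filter fun i => x i ≠ 0) := by
    intro i hi
    simp only [Finset.mem_filter, Finset.mem_union, Finset.mem_univ, true_and] at *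
    by_contra hc
    push_neg at hc
    apply hi
    simp [Pi.sub_apply, hc.1, hc.2]
  calc (Finset.univ.filter fun i => (z - x) i ≠ 0).card
      ≤ ((Finset.univ.filter fun i => z i ≠ 0) ∪ (Finset.univ.filter fun i => x i ≠ 0)).card :=
        Finset.card_le_card h
    _ ≤ _ := Finset.card_union_le _ _

theorem stmt_0 {m n : ℕ} (A : Matrix (Fin m) (Fin n) ℝ) (y : Fin m → ℝ)
    (x : Fin n → ℝ) (hx : A.mulVec x = y)
    (hs : (sparsity x : ℝ) < (spark A : ℝ) / 2) :
    ∀ z : Fin n → ℝ, A.mulVec z = y → (sparsity z : ℝ) < (spark A : ℝ) / 2 →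
      z = x := by
  intro z hz hsz
  by_contra hne
  have hv : z - x ≠ 0 := sub_ne_zero.mpr hne
  have hker : A.mulVec (z - x) = 0 := by
    rw [Matrix.mulVec_sub, hz, hx, sub_self]
  have hmem : sparsity (z - x) ∈
      {k | ∃ v : Fin n → ℝ, v ≠ 0 ∧ A.mulVec v = 0 ∧ sparsity v = k} :=
    ⟨z - x, hv, hker, rfl⟩
  have hle : spark A ≤ sparsity (z - x) := Nat.sInf_le hmem
  have h1 : (spark A : ℝ) ≤ sparsity (z - x) := by exact_mod_cast hle
  have h2 : (sparsity (z - x) : ℝ) ≤ (sparsity z : ℝ) + sparsity x := by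
    exact_mod_cast sparsity_sub_le z x
  linarith
end

section
/- If X ∈ ℝ^{n×M} satisfies Y = AX and the number of nonzero rows of X satisfies ‖X‖₀ < (spark(A) + rank(Y) − 1)/2, then X is the unique solution among all matrices Z with Y = AZ and ‖Z‖₀ ≤ ‖X‖₀. -/
open Classical in
/-- Number of nonzero rows of a matrix (the joint-sparsity "norm" ‖X‖₀). -/
noncomputable def rowSparsity {n M : ℕ} (X : Matrix (Fin n) (Fin M) ℝ) : ℕ :=
  (Finset.univ.filter fun j => X j ≠ 0).card

/-!
Suppose `Z ≠ X` is another solution with `‖Z‖₀ ≤ ‖X‖₀` and put `D = X - Z`. The columns of `D`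
span a subspace of `ker A` of dimension `rank D ≥ 1`, all of whose vectors vanish off
`supp X ∪ supp Z`. Forcing `rank D - 1` of those coordinates to vanish still leaves a nonzero
vector, so `spark A + rank D ≤ |supp X ∪ supp Z| + 1`. On the other hand, off `supp Z` the rows
of `X` are those of `D`, so `rank Y ≤ rank X ≤ |supp X ∩ supp Z| + rank D`. Adding the two bounds
gives `spark A + rank Y ≤ ‖X‖₀ + ‖Z‖₀ + 1 ≤ 2 ‖X‖₀ + 1`.
-/

open Finset Module Matrix

lemma Submodule.exists_ne_zero_forall_mem_eq_zero {𝕜 ι : Type*} [Field 𝕜] [Fintype ι]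
    (K : Submodule 𝕜 (ι → 𝕜)) (s : Finset ι) (hs : #s < finrank 𝕜 K) :
    ∃ v ∈ K, v ≠ 0 ∧ ∀ i ∈ s, v i = 0 := by
  let restrict : K →ₗ[𝕜] (s → 𝕜) := LinearMap.funLeft 𝕜 𝕜 ((↑) : s → ι) ∘ₗ K.subtype
  have hker : LinearMap.ker restrict ≠ ⊥ :=
    LinearMap.ker_ne_bot_of_finrank_lt (by simpa using hs)
  obtain ⟨⟨v, hvK⟩, hv, hv0⟩ := (Submodule.ne_bot_iff _).mp hker
  refine ⟨v, hvK, fun h => hv0 (by simp [h]), fun i hi => ?_⟩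
  exact congrFun hv ⟨i, hi⟩

lemma sparsity_le_card {n : ℕ} {v : Fin n → ℝ} {s : Finset (Fin n)}
    (hv : ∀ i ∉ s, v i = 0) : sparsity v ≤ #s :=
  card_le_card fun i hi => by
    by_contra his
    exact (mem_filter.mp hi).2 (hv i his)

lemma exists_ne_zero_sparsity_add_finrank_le {n : ℕ} (K : Submodule ℝ (Fin n → ℝ))
    (hK : K ≠ ⊥) (S : Finset (Fin n)) (hKS : ∀ v ∈ K, ∀ i ∉ S, v i = 0) :
    ∃ v ∈ K, v ≠ 0 ∧ sparsity v + finrank ℝ K ≤ #S + 1 := by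
  have hd : 0 < finrank ℝ K := Nat.pos_of_ne_zero (Submodule.finrank_eq_zero.not.mpr hK)
  have hdS : finrank ℝ K ≤ #S := by
    by_contra! h
    obtain ⟨v, hvK, hv0, hvS⟩ := K.exists_ne_zero_forall_mem_eq_zero S h
    exact hv0 (funext fun i => if hi : i ∈ S then hvS i hi else hKS v hvK i hi)
  obtain ⟨s, hsS, hs⟩ := le_card_iff_exists_subset_card.mp ((Nat.sub_le _ 1).trans hdS)
  obtain ⟨v, hvK, hv0, hvs⟩ := K.exists_ne_zero_forall_mem_eq_zero s (by omega)
  have hsparse : sparsity v ≤ #(S \ s) := sparsity_le_card fun i hi => by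
    rw [mem_sdiff, not_and_not_right] at hi
    by_cases hiS : i ∈ S
    · exact hvs i (hi hiS)
    · exact hKS v hvK i hiS
  refine ⟨v, hvK, hv0, ?_⟩
  rw [card_sdiff_of_subset hsS] at hsparse
  omega

lemma spark_le_sparsity {m n : ℕ} {A : Matrix (Fin m) (Fin n) ℝ} {v : Fin n → ℝ}
    (hv : v ≠ 0) (hAv : A *ᵥ v = 0) : spark A ≤ sparsity v :=
  Nat.sInf_le ⟨v, hv, hAv, rfl⟩

namespace Matrix

variable {m n M : ℕ}

open Classical in
noncomputable def rowSupport {ι κ R : Type*} [Fintype ι] [Zero R] (X : Matrix ι κ R) :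
    Finset ι :=
  univ.filter fun i => X i ≠ 0

lemma rowSparsity_eq_card_rowSupport (X : Matrix (Fin n) (Fin M) ℝ) :
    rowSparsity X = #(rowSupport X) := by
  simp only [rowSparsity, rowSupport]

lemma mulVec_apply_eq_zero_of_row_eq_zero {ι κ R : Type*} [Fintype κ]
    [NonUnitalNonAssocSemiring R] {X : Matrix ι κ R} {i : ι} (hi : X i = 0) (c : κ → R) :
    (X *ᵥ c) i = 0 := by
  simp [mulVec, hi]

lemma rank_add_le {ι κ R : Type*} [Fintype κ] [Field R] (X Z : Matrix ι κ R) :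
    (X + Z).rank ≤ X.rank + Z.rank := by
  rw [rank, mulVecLin_add]
  exact (Submodule.finrank_mono (LinearMap.range_add_le _ _)).trans
    (Submodule.finrank_add_le_finrank_add_finrank _ _)

lemma rank_le_card_of_row_eq_zero {ι κ R : Type*} [Fintype ι] [Fintype κ]
    [Field R] {X : Matrix ι κ R} (s : Finset ι) (hs : ∀ i ∉ s, X i = 0) : X.rank ≤ #s := by
  classical
  have hX : diagonal (fun i => if i ∈ s then (1 : R) else 0) * X = X := by
    ext i j
    by_cases hi : i ∈ s <;> simp [hi, hs]
  rw [← hX]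
  refine (rank_mul_le_left _ _).trans ?_
  rw [rank_diagonal, Fintype.card_subtype]
  exact card_le_card fun i => by simp

lemma spark_add_rank_le {A : Matrix (Fin m) (Fin n) ℝ} {D : Matrix (Fin n) (Fin M) ℝ}
    (hD : D ≠ 0) (hAD : A * D = 0) : spark A + D.rank ≤ rowSparsity D + 1 := by
  have hK : LinearMap.range D.mulVecLin ≠ ⊥ := by
    rwa [Ne, LinearMap.range_eq_bot, ← toLin'_apply', map_eq_zero_iff _ toLin'.injective]
  obtain ⟨v, ⟨c, rfl⟩, hv0, hv⟩ := exists_ne_zero_sparsity_add_finrank_le _ hK (rowSupport D)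
    (by
      rintro _ ⟨c, rfl⟩ i hi
      exact mulVec_apply_eq_zero_of_row_eq_zero (by simpa [rowSupport] using hi) c)
  rw [mulVecLin_apply] at hv0 hv
  have hspark : spark A ≤ sparsity (D *ᵥ c) :=
    spark_le_sparsity hv0 (by rw [mulVec_mulVec, hAD, zero_mulVec])
  rw [rowSparsity_eq_card_rowSupport]
  exact (Nat.add_le_add_right hspark _).trans hv

lemma rowSupport_sub_subset {ι κ R : Type*} [Fintype ι] [DecidableEq ι] [AddGroup R]
    (X Z : Matrix ι κ R) : rowSupport (X - Z) ⊆ rowSupport X ∪ rowSupport Z := by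
  intro i hi
  by_contra! h
  simp only [rowSupport, mem_union, mem_filter, mem_univ, true_and, not_or, not_not] at h hi
  exact hi (funext fun j => by simp [sub_apply, congrFun h.1 j, congrFun h.2 j])

lemma rank_le_card_rowSupport_inter_add_rank_sub {ι κ R : Type*} [Fintype ι] [DecidableEq ι]
    [Fintype κ] [Field R] (X Z : Matrix ι κ R) :
    X.rank ≤ #(rowSupport X ∩ rowSupport Z) + (X - Z).rank := by
  classical
  let Q : Matrix ι ι R := diagonal fun i => if Z i = 0 then 1 else 0
  have hQZ : Q * Z = 0 := by
    ext i j
    by_cases hi : Z i = 0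
    · simp [Q, congrFun hi j]
    · simp [Q, hi]
  have hrows : ∀ i ∉ rowSupport X ∩ rowSupport Z, (X - Q * X) i = 0 := by
    intro i hi
    simp only [rowSupport, mem_inter, mem_filter, mem_univ, true_and, not_and_or, not_not] at hi
    ext j
    rcases hi with hXi | hZi
    · simp [Q, congrFun hXi j]
    · simp [Q, hZi]
  calc X.rank = (X - Q * X + Q * (X - Z)).rank := by
        rw [Matrix.mul_sub, hQZ, sub_zero, sub_add_cancel]
    _ ≤ (X - Q * X).rank + (Q * (X - Z)).rank := rank_add_le _ _
    _ ≤ #(rowSupport X ∩ rowSupport Z) + (X - Z).rank :=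
      add_le_add (rank_le_card_of_row_eq_zero _ hrows) (rank_mul_le_right _ _)

end Matrix

theorem stmt_2 {m n M : ℕ} (A : Matrix (Fin m) (Fin n) ℝ)
    (Y : Matrix (Fin m) (Fin M) ℝ) (X : Matrix (Fin n) (Fin M) ℝ)
    (hX : A * X = Y)
    (hs : (rowSparsity X : ℝ) < ((spark A : ℝ) + (Y.rank : ℝ) - 1) / 2) :
    ∀ Z : Matrix (Fin n) (Fin M) ℝ, A * Z = Y →
      rowSparsity Z ≤ rowSparsity X → Z = X := by
  intro Z hZ hZX
  by_contra hne
  have hspark : spark A + (X - Z).rank ≤ #(rowSupport X ∪ rowSupport Z) + 1 := by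
    refine (spark_add_rank_le (sub_ne_zero.mpr (Ne.symm hne)) ?_).trans ?_
    · rw [Matrix.mul_sub, hX, hZ, sub_self]
    · rw [rowSparsity_eq_card_rowSupport]
      exact Nat.add_le_add_right (card_le_card (rowSupport_sub_subset X Z)) 1
  have hrank : Y.rank ≤ #(rowSupport X ∩ rowSupport Z) + (X - Z).rank :=
    hX ▸ (rank_mul_le_right A X).trans (rank_le_card_rowSupport_inter_add_rank_sub X Z)
  have hcard := card_union_add_card_inter (rowSupport X) (rowSupport Z)
  simp only [rowSparsity_eq_card_rowSupport] at hZX hs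
  have hsum : spark A + Y.rank ≤ 2 * #(rowSupport X) + 1 := by omega
  have hsum_real : (spark A : ℝ) + Y.rank ≤ 2 * #(rowSupport X) + 1 := by exact_mod_cast hsum
  linarith
end
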